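/- arXiv:2510.16918 — 3 statements merged into one kernel-verified Lean document; each statement's English description precedes it below -/
import Mathlib

section
/- For probability distributions p, q on a finite alphabet and stochastic matrices M, N, one has D(p‖q) − D(Mp‖Nq) ≥ −∑_j p_j · D(Mδ_j‖Nδ_j), where δ_j is the point distribution at j and D denotes Kullback–Leibler divergence. -/
noncomputable section

/-- Kullback–Leibler divergence on finite probability vectors
(with the conventions `0 * log (0/q) = 0`, via `Real.log 0 = 0` and `0 * x = 0`). -/
def klDiv {n : ℕ} (p q : Fin n → ℝ) : ℝ := ∑ x, p x * Real.log (p x / q x)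

lemma kl_pointwise (a b : ℝ) (ha : 0 ≤ a) (hb : 0 ≤ b) (h : b = 0 → a = 0) :
    a - b ≤ a * Real.log (a / b) := by
  rcases eq_or_lt_of_le ha with ha0 | ha0
  · simp [← ha0]; exact hb
  have hb0 : 0 < b := lt_of_le_of_ne hb (fun hh => (ha0.ne' (h hh.symm)))
  have h1 : Real.log (b / a) ≤ b / a - 1 := Real.log_le_sub_one_of_pos (by positivity)
  have h2 : Real.log (b / a) = - Real.log (a / b) := by
    rw [Real.log_div hb0.ne' ha0.ne', Real.log_div ha0.ne' hb0.ne']; ring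
  rw [h2] at h1
  have : 1 - b / a ≤ Real.log (a / b) := by linarith
  calc a - b = a * (1 - b / a) := by field_simp
    _ ≤ a * Real.log (a / b) := by
        exact mul_le_mul_of_nonneg_left this ha

/-- Log-sum inequality. -/
lemma log_sum {k : ℕ} (f g : Fin k → ℝ) (hf : ∀ j, 0 ≤ f j) (hg : ∀ j, 0 ≤ g j)
    (hfg : ∀ j, g j = 0 → f j = 0) :
    (∑ j, f j) * Real.log ((∑ j, f j) / (∑ j, g j)) ≤ ∑ j, f j * Real.log (f j / g j) := by
  set F := ∑ j, f j with hF
  set G := ∑ j, g j with hG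
  have hF0 : 0 ≤ F := Finset.sum_nonneg fun j _ => hf j
  have hG0 : 0 ≤ G := Finset.sum_nonneg fun j _ => hg j
  rcases eq_or_lt_of_le hF0 with hF0' | hF0'
  · -- F = 0, so each f j = 0
    have hfz : ∀ j, f j = 0 := by
      intro j
      have := (Finset.sum_eq_zero_iff_of_nonneg (fun j _ => hf j)).1 hF0'.symm
      exact this j (Finset.mem_univ j)
    simp [← hF, ← hF0', hfz]
  have hGpos : 0 < G := by
    rcases eq_or_lt_of_le hG0 with hG0' | hG0'
    · exfalso
      have hgz : ∀ j, g j = 0 := by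
        intro j
        have := (Finset.sum_eq_zero_iff_of_nonneg (fun j _ => hg j)).1 hG0'.symm
        exact this j (Finset.mem_univ j)
      have : F = 0 := Finset.sum_eq_zero fun j _ => hfg j (hgz j)
      exact hF0'.ne' this
    · exact hG0'
  -- key pointwise bound
  have key : ∀ j, f j - g j * (F / G) ≤ f j * (Real.log (f j / g j) - Real.log (F / G)) := by
    intro j
    rcases eq_or_lt_of_le (hf j) with hfj | hfj
    · rw [← hfj]
      have h0 : 0 ≤ g j * (F / G) := mul_nonneg (hg j) (div_nonneg hF0 hGpos.le)
      simp only [zero_mul, zero_sub]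
      linarith
    have hgj : 0 < g j := by
      rcases eq_or_lt_of_le (hg j) with h' | h'
      · exact absurd (hfg j h'.symm) hfj.ne'
      · exact h'
    have := kl_pointwise (f j) (g j * (F / G)) (hf j) (by positivity)
      (fun hh => absurd hh (by positivity))
    have heq : Real.log (f j / (g j * (F / G))) = Real.log (f j / g j) - Real.log (F / G) := by
      rw [div_mul_eq_div_div, Real.log_div (by positivity) (by positivity),
        Real.log_div hfj.ne' hgj.ne']
    rw [heq] at this
    exact this
  have hsum := Finset.sum_le_sum (fun j (_ : j ∈ Finset.univ) => key j)
  have hL : ∑ j, (f j - g j * (F / G)) = 0 := by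
    rw [Finset.sum_sub_distrib, ← Finset.sum_mul, ← hF, ← hG]
    field_simp
    ring
  have hR : ∑ j, f j * (Real.log (f j / g j) - Real.log (F / G))
      = (∑ j, f j * Real.log (f j / g j)) - F * Real.log (F / G) := by
    simp only [mul_sub]
    rw [Finset.sum_sub_distrib, ← Finset.sum_mul, ← hF]
  rw [hL, hR] at hsum
  linarith

/-- Classical chain rule for relative entropy:
`D(p‖q) − D(Mp‖Nq) ≥ −∑_j p_j D(Mδ_j‖Nδ_j)` for probability vectors and
column-stochastic matrices, under support compatibility (finiteness of the divergences). -/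
theorem classical_chain_rule {n m : ℕ} (p q : Fin n → ℝ) (M N : Fin m → Fin n → ℝ)
    (hp0 : ∀ j, 0 ≤ p j) (hq0 : ∀ j, 0 ≤ q j)
    (hp1 : ∑ j, p j = 1) (hq1 : ∑ j, q j = 1)
    (hM0 : ∀ i j, 0 ≤ M i j) (hN0 : ∀ i j, 0 ≤ N i j)
    (hM1 : ∀ j, ∑ i, M i j = 1) (hN1 : ∀ j, ∑ i, N i j = 1)
    (hpq : ∀ j, q j = 0 → p j = 0)
    (hMN : ∀ i j, p j ≠ 0 → N i j = 0 → M i j = 0) :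
    klDiv p q - klDiv (fun i => ∑ j, M i j * p j) (fun i => ∑ j, N i j * q j) ≥
      -∑ j, p j * klDiv (fun i => M i j) (fun i => N i j) := by
  set T : ℝ := ∑ i, ∑ j, (M i j * p j) * Real.log ((M i j * p j) / (N i j * q j)) with hT
  -- Step 1: T = klDiv p q + ∑_j p_j klDiv (Mδ_j) (Nδ_j)
  have step1 : T = klDiv p q + ∑ j, p j * klDiv (fun i => M i j) (fun i => N i j) := by
    have point : ∀ i j, (M i j * p j) * Real.log ((M i j * p j) / (N i j * q j))
        = M i j * (p j * Real.log (p j / q j)) + p j * (M i j * Real.log (M i j / N i j)) := by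
      intro i j
      rcases eq_or_lt_of_le (hp0 j) with hpj | hpj
      · simp [← hpj]
      have hqj : 0 < q j := by
        rcases eq_or_lt_of_le (hq0 j) with h' | h'
        · exact absurd (hpq j h'.symm) hpj.ne'
        · exact h'
      rcases eq_or_lt_of_le (hM0 i j) with hMij | hMij
      · simp [← hMij]
      have hNij : 0 < N i j := by
        rcases eq_or_lt_of_le (hN0 i j) with h' | h'
        · exact absurd (hMN i j hpj.ne' h'.symm) hMij.ne'
        · exact h'
      have : Real.log ((M i j * p j) / (N i j * q j))
          = Real.log (p j / q j) + Real.log (M i j / N i j) := by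
        rw [mul_div_mul_comm, Real.log_mul (by positivity) (by positivity)]
        ring
      rw [this]; ring
    rw [hT]
    simp only [point]
    rw [Finset.sum_comm]
    simp only [Finset.sum_add_distrib]
    congr 1
    · unfold klDiv
      apply Finset.sum_congr rfl
      intro j _
      rw [← Finset.sum_mul, hM1 j, one_mul]
    · unfold klDiv
      apply Finset.sum_congr rfl
      intro j _
      rw [← Finset.mul_sum]
  -- Step 2: klDiv (Mp) (Nq) ≤ T
  have step2 : klDiv (fun i => ∑ j, M i j * p j) (fun i => ∑ j, N i j * q j) ≤ T := by
    unfold klDiv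
    apply Finset.sum_le_sum
    intro i _
    apply log_sum (fun j => M i j * p j) (fun j => N i j * q j)
      (fun j => mul_nonneg (hM0 i j) (hp0 j)) (fun j => mul_nonneg (hN0 i j) (hq0 j))
    intro j h
    rcases mul_eq_zero.1 h with h' | h'
    · rcases eq_or_ne (p j) 0 with hpj | hpj
      · rw [hpj, mul_zero]
      · rw [hMN i j hpj h', zero_mul]
    · rw [hpq j h', mul_zero]
  linarith [step1, step2]
end
end

section
/- The Peierls–Bogoliubov inequality: for Hermitian matrices F and R with Tr[e^R] = 1, one has Tr[e^{F+R}] ≥ exp(Tr[F e^R]). -/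
noncomputable section

open Matrix Finset

/-- The purely real combinatorial core: Jensen twice with a doubly stochastic matrix. -/
lemma pb_real_core {n : ℕ} (a r : Fin n → ℝ) (s : Fin n → Fin n → ℝ)
    (hs0 : ∀ i j, 0 ≤ s i j) (hrow : ∀ i, ∑ j, s i j = 1) (hcol : ∀ j, ∑ i, s i j = 1)
    (hp : ∑ i, Real.exp (r i) = 1) :
    Real.exp ((∑ i, (∑ j, a j * s i j) * Real.exp (r i)) - ∑ i, r i * Real.exp (r i))
      ≤ ∑ j, Real.exp (a j) := by
  have key1 : ∀ i, Real.exp (∑ j, a j * s i j) ≤ ∑ j, s i j * Real.exp (a j) := by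
    intro i
    have h := convexOn_exp.map_sum_le (t := Finset.univ) (w := s i) (p := a)
      (fun j _ => hs0 i j) (hrow i) (fun j _ => Set.mem_univ _)
    simpa [smul_eq_mul, mul_comm] using h
  have key2 : Real.exp (∑ i, Real.exp (r i) * ((∑ j, a j * s i j) - r i))
      ≤ ∑ i, Real.exp (r i) * Real.exp ((∑ j, a j * s i j) - r i) := by
    have h := convexOn_exp.map_sum_le (t := Finset.univ)
      (w := fun i => Real.exp (r i)) (p := fun i => (∑ j, a j * s i j) - r i)
      (fun i _ => (Real.exp_pos _).le) hp (fun i _ => Set.mem_univ _)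
    simpa [smul_eq_mul] using h
  calc Real.exp ((∑ i, (∑ j, a j * s i j) * Real.exp (r i)) - ∑ i, r i * Real.exp (r i))
      = Real.exp (∑ i, Real.exp (r i) * ((∑ j, a j * s i j) - r i)) := by
        congr 1
        rw [← Finset.sum_sub_distrib]
        exact Finset.sum_congr rfl (fun i _ => by ring)
    _ ≤ ∑ i, Real.exp (r i) * Real.exp ((∑ j, a j * s i j) - r i) := key2
    _ = ∑ i, Real.exp (∑ j, a j * s i j) := by
        refine Finset.sum_congr rfl (fun i _ => ?_)
        rw [Real.exp_sub, mul_div_cancel₀ _ (Real.exp_ne_zero _)]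
    _ ≤ ∑ i, ∑ j, s i j * Real.exp (a j) := Finset.sum_le_sum (fun i _ => key1 i)
    _ = ∑ j, Real.exp (a j) := by
        rw [Finset.sum_comm]
        refine Finset.sum_congr rfl (fun j _ => ?_)
        rw [← Finset.sum_mul, hcol, one_mul]

/-- Exponential of a Hermitian matrix via its spectral decomposition. -/
lemma pb_exp_herm {n : ℕ} {A : Matrix (Fin n) (Fin n) ℂ} (hA : A.IsHermitian) :
    NormedSpace.exp A = (hA.eigenvectorUnitary : Matrix (Fin n) (Fin n) ℂ)
      * Matrix.diagonal (fun i => Complex.exp (hA.eigenvalues i))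
      * star (hA.eigenvectorUnitary : Matrix (Fin n) (Fin n) ℂ) := by
  set U : Matrix (Fin n) (Fin n) ℂ := (hA.eigenvectorUnitary : Matrix (Fin n) (Fin n) ℂ) with hU
  have hmem := hA.eigenvectorUnitary.2
  have h1 : U * star U = 1 := (Matrix.mem_unitaryGroup_iff).mp hmem
  have h2 : star U * U = 1 := (Matrix.mem_unitaryGroup_iff').mp hmem
  have hUnit : IsUnit U := ⟨⟨U, star U, h1, h2⟩, rfl⟩
  have hinv : U⁻¹ = star U := Matrix.inv_eq_right_inv h1
  conv_lhs => rw [hA.spectral_theorem, Unitary.conjStarAlgAut_apply]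
  rw [← hU, ← hinv, Matrix.exp_conj U _ hUnit, Matrix.exp_diagonal, hinv]
  congr 2
  rw [Pi.exp_def]
  funext i
  simp [Function.comp, ← Complex.exp_eq_exp_ℂ]

/-- The Peierls–Bogoliubov inequality: for Hermitian matrices `F` and `R` with
`Tr[e^R] = 1`, one has `Tr[e^{F+R}] ≥ exp(Tr[F e^R])` (the traces being real numbers). -/
theorem peierls_bogoliubov {n : ℕ} (F R : Matrix (Fin n) (Fin n) ℂ)
    (hF : F.IsHermitian) (hR : R.IsHermitian)
    (htr : (NormedSpace.exp R).trace = 1) :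
    ((NormedSpace.exp (F + R)).trace).re ≥
      Real.exp (((F * NormedSpace.exp R).trace).re) := by
  have hA : (F + R).IsHermitian := hF.add hR
  set A := F + R with hAdef
  set a : Fin n → ℝ := hA.eigenvalues with ha
  set r : Fin n → ℝ := hR.eigenvalues with hr
  set U : Matrix (Fin n) (Fin n) ℂ := (hA.eigenvectorUnitary : Matrix (Fin n) (Fin n) ℂ) with hU
  set V : Matrix (Fin n) (Fin n) ℂ := (hR.eigenvectorUnitary : Matrix (Fin n) (Fin n) ℂ) with hV
  have hU1 : U * star U = 1 := (Matrix.mem_unitaryGroup_iff).mp hA.eigenvectorUnitary.2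
  have hU2 : star U * U = 1 := (Matrix.mem_unitaryGroup_iff').mp hA.eigenvectorUnitary.2
  have hV1 : V * star V = 1 := (Matrix.mem_unitaryGroup_iff).mp hR.eigenvectorUnitary.2
  have hV2 : star V * V = 1 := (Matrix.mem_unitaryGroup_iff').mp hR.eigenvectorUnitary.2
  set W : Matrix (Fin n) (Fin n) ℂ := star V * U with hW
  have hW1 : W * star W = 1 := by
    rw [hW, StarMul.star_mul, star_star, mul_assoc, ← mul_assoc U, hU1, one_mul, hV2]
  have hW2 : star W * W = 1 := by
    rw [hW, StarMul.star_mul, star_star, mul_assoc, ← mul_assoc V, hV1, one_mul, hU2]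
  set s : Fin n → Fin n → ℝ := fun i j => Complex.normSq (W i j) with hs
  have hs0 : ∀ i j, 0 ≤ s i j := fun i j => Complex.normSq_nonneg _
  -- row and column sums
  have hrow : ∀ i, ∑ j, s i j = 1 := by
    intro i
    have h : (W * star W) i i = 1 := by rw [hW1, Matrix.one_apply_eq]
    rw [Matrix.mul_apply] at h
    have : (((∑ j, s i j : ℝ)) : ℂ) = 1 := by
      rw [Complex.ofReal_sum]
      rw [← h]
      refine Finset.sum_congr rfl (fun j _ => ?_)
      rw [Matrix.star_apply, Complex.star_def, Complex.mul_conj]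
    exact_mod_cast this
  have hcol : ∀ j, ∑ i, s i j = 1 := by
    intro j
    have h : (star W * W) j j = 1 := by rw [hW2, Matrix.one_apply_eq]
    rw [Matrix.mul_apply] at h
    have : (((∑ i, s i j : ℝ)) : ℂ) = 1 := by
      rw [Complex.ofReal_sum]
      rw [← h]
      refine Finset.sum_congr rfl (fun i _ => ?_)
      rw [Matrix.star_apply, Complex.star_def, mul_comm, Complex.mul_conj]
    exact_mod_cast this
  -- exp R and exp A decompositions
  have hexpR : NormedSpace.exp R = V * Matrix.diagonal (fun i => Complex.exp (r i)) * star V :=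
    pb_exp_herm hR
  have hexpA : NormedSpace.exp A = U * Matrix.diagonal (fun i => Complex.exp (a i)) * star U :=
    pb_exp_herm hA
  -- trace of exp R as a real sum
  have hp : ∑ i, Real.exp (r i) = 1 := by
    have h : (NormedSpace.exp R).trace = ∑ i, Complex.exp (r i) := by
      rw [hexpR, Matrix.trace_mul_cycle, hV2, one_mul, Matrix.trace_diagonal]
    rw [htr] at h
    have : (((∑ i, Real.exp (r i) : ℝ)) : ℂ) = 1 := by
      rw [Complex.ofReal_sum, h]
      exact Finset.sum_congr rfl (fun i _ => (Complex.ofReal_exp _).symm ▸ rfl)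
    exact_mod_cast this
  -- trace of exp A
  have hTA : ((NormedSpace.exp A).trace).re = ∑ j, Real.exp (a j) := by
    have h : (NormedSpace.exp A).trace = ∑ j, Complex.exp (a j) := by
      rw [hexpA, Matrix.trace_mul_cycle, hU2, one_mul, Matrix.trace_diagonal]
    rw [h]
    rw [Complex.re_sum]
    refine Finset.sum_congr rfl (fun j _ => ?_)
    rw [← Complex.ofReal_exp, Complex.ofReal_re]
  -- trace of A * exp R
  have hAVD : star V * A * V = W * Matrix.diagonal (fun j => (a j : ℂ)) * star W := by
    have : A = U * Matrix.diagonal (RCLike.ofReal ∘ a) * star U := hA.spectral_theorem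
    rw [this, hW, StarMul.star_mul, star_star]
    have : Matrix.diagonal (RCLike.ofReal ∘ a) = Matrix.diagonal (fun j => (a j : ℂ)) := rfl
    rw [this]
    noncomm_ring
  have hTAR : ((A * NormedSpace.exp R).trace) =
      ((∑ i, (∑ j, a j * s i j) * Real.exp (r i) : ℝ) : ℂ) := by
    rw [hexpR]
    have h1 : A * (V * Matrix.diagonal (fun i => Complex.exp (r i)) * star V)
        = (A * V) * Matrix.diagonal (fun i => Complex.exp (r i)) * star V := by noncomm_ring
    rw [h1, Matrix.trace_mul_cycle]
    have h2 : star V * (A * V) = star V * A * V := by rw [mul_assoc]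
    rw [h2, hAVD]
    rw [Matrix.trace]
    rw [Complex.ofReal_sum]
    refine Finset.sum_congr rfl (fun i _ => ?_)
    rw [Matrix.diag_apply, Matrix.mul_diagonal]
    rw [Complex.ofReal_mul, Complex.ofReal_exp]
    congr 1
    · rw [Matrix.mul_apply, Complex.ofReal_sum]
      refine Finset.sum_congr rfl (fun j _ => ?_)
      rw [Matrix.mul_apply]
      rw [Finset.sum_eq_single j]
      · rw [Matrix.diagonal_apply_eq, Matrix.star_apply, Complex.star_def,
          Complex.ofReal_mul, hs, ← Complex.mul_conj]
        ring
      · intro b _ hb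
        rw [Matrix.diagonal_apply_ne _ hb, mul_zero]
      · intro hj; exact absurd (Finset.mem_univ j) hj
  -- trace of R * exp R
  have hRVD : star V * R * V = Matrix.diagonal (fun j => (r j : ℂ)) := by
    have h := hR.conjStarAlgAut_star_eigenvectorUnitary
    rw [Unitary.conjStarAlgAut_star_apply, ← hV] at h
    exact h
  have hTRR : ((R * NormedSpace.exp R).trace) =
      ((∑ i, r i * Real.exp (r i) : ℝ) : ℂ) := by
    rw [hexpR]
    have h1 : R * (V * Matrix.diagonal (fun i => Complex.exp (r i)) * star V)
        = (R * V) * Matrix.diagonal (fun i => Complex.exp (r i)) * star V := by noncomm_ring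
    rw [h1, Matrix.trace_mul_cycle]
    have h2 : star V * (R * V) = star V * R * V := by rw [mul_assoc]
    rw [h2, hRVD, Matrix.diagonal_mul_diagonal, Matrix.trace_diagonal]
    rw [Complex.ofReal_sum]
    refine Finset.sum_congr rfl (fun i _ => ?_)
    push_cast
    ring
  -- put it together
  have hF' : F = A - R := by rw [hAdef, add_sub_cancel_right]
  have hTF : ((F * NormedSpace.exp R).trace).re =
      (∑ i, (∑ j, a j * s i j) * Real.exp (r i)) - ∑ i, r i * Real.exp (r i) := by
    rw [hF', sub_mul, Matrix.trace_sub, hTAR, hTRR]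
    rw [← Complex.ofReal_sub, Complex.ofReal_re]
  rw [hTF, ge_iff_le]
  calc Real.exp ((∑ i, (∑ j, a j * s i j) * Real.exp (r i)) - ∑ i, r i * Real.exp (r i))
      ≤ ∑ j, Real.exp (a j) := pb_real_core a r s hs0 hrow hcol hp
    _ = ((NormedSpace.exp A).trace).re := hTA.symm
end
end

section
/- For the qubit channel M(x) = Tr(x)·|−⟩⟨−| and the pinching N in the eigenbasis of σ = (1−ε)|+⟩⟨+| + ε|−⟩⟨−| (0 < ε < 1), applied to ρ = |0⟩⟨0|, one has D(M(ρ)‖N(σ)) = −log ε, and hence D(ρ‖σ) − D(M(ρ)‖N(σ)) = (1/2)(log ε − log(1−ε)). -/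
open scoped Matrix ComplexOrder
noncomputable section

open Classical in
/-- Matrix logarithm via spectral calculus (0 eigenvalues are sent to 0 since `Real.log 0 = 0`). -/
def matLog {n : Type*} [Fintype n] [DecidableEq n] (A : Matrix n n ℂ) : Matrix n n ℂ :=
  if hA : A.IsHermitian then
    (hA.eigenvectorUnitary : Matrix n n ℂ) *
      Matrix.diagonal (fun i => (Real.log (hA.eigenvalues i) : ℂ)) *
      (star (hA.eigenvectorUnitary : Matrix n n ℂ))
  else 0

/-- `supp ρ ⊆ supp σ`, stated via kernel containment (equivalent for Hermitian matrices). -/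
def suppLE {n : Type*} [Fintype n] (ρ σ : Matrix n n ℂ) : Prop :=
  ∀ v, σ.mulVec v = 0 → ρ.mulVec v = 0

/-- Umegaki relative entropy `Tr[ρ (log ρ − log σ)]` (real part of the trace). -/
def relEnt {n : Type*} [Fintype n] [DecidableEq n] (ρ σ : Matrix n n ℂ) : ℝ :=
  ((ρ * (matLog ρ - matLog σ)).trace).re

/-- A density matrix: positive semidefinite with unit trace. -/
def IsDensity {n : Type*} [Fintype n] (ρ : Matrix n n ℂ) : Prop :=
  ρ.PosSemidef ∧ ρ.trace = 1

/-- CPTP map: admits a Kraus representation and preserves the trace. -/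
def IsCPTP {n m : ℕ} (M : Matrix (Fin n) (Fin n) ℂ →ₗ[ℂ] Matrix (Fin m) (Fin m) ℂ) : Prop :=
  (∃ r : ℕ, ∃ K : Fin r → Matrix (Fin m) (Fin n) ℂ,
      ∀ A, M A = ∑ i, K i * A * (K i)ᴴ) ∧
  ∀ A, (M A).trace = A.trace

/-- The projector `|0⟩⟨0|` on ℂ². -/
def proj0 : Matrix (Fin 2) (Fin 2) ℂ := !![1, 0; 0, 0]

/-- The projector `|+⟩⟨+|` on ℂ², with `|+⟩ = (|0⟩+|1⟩)/√2`. -/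
def projPlus : Matrix (Fin 2) (Fin 2) ℂ := !![1/2, 1/2; 1/2, 1/2]

/-- The projector `|−⟩⟨−|` on ℂ², with `|−⟩ = (|0⟩−|1⟩)/√2`. -/
def projMinus : Matrix (Fin 2) (Fin 2) ℂ := !![1/2, -(1/2); -(1/2), 1/2]

/-- The replacer channel `M(x) = Tr(x)·|−⟩⟨−|`. -/
def chanM (x : Matrix (Fin 2) (Fin 2) ℂ) : Matrix (Fin 2) (Fin 2) ℂ := x.trace • projMinus

/-- The pinching channel in the `|±⟩` basis: `N(x) = |+⟩⟨+|x|+⟩⟨+| + |−⟩⟨−|x|−⟩⟨−|`. -/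
def chanN (x : Matrix (Fin 2) (Fin 2) ℂ) : Matrix (Fin 2) (Fin 2) ℂ :=
  projPlus * x * projPlus + projMinus * x * projMinus

lemma eigen_quad {n : Type*} [Fintype n] [DecidableEq n] {A : Matrix n n ℂ}
    (hA : A.IsHermitian) (c d : ℝ)
    (h : (A - (c:ℂ) • 1) * (A - (d:ℂ) • 1) = 0) (i : n) :
    hA.eigenvalues i = c ∨ hA.eigenvalues i = d := by
  set v := ⇑(hA.eigenvectorBasis i) with hv
  have hv0 : v ≠ 0 := by
    have := hA.eigenvectorBasis.orthonormal.ne_zero i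
    intro hcon
    apply this
    ext j
    exact congrFun hcon j
  set lam := hA.eigenvalues i with hlam
  have hmv : A *ᵥ v = (lam : ℂ) • v := by
    have := hA.mulVec_eigenvectorBasis i
    rw [← hv] at this
    rw [this]
    ext j
    simp [Complex.real_smul, hlam]
  have h1 : (A - (d:ℂ) • 1) *ᵥ v = ((lam : ℂ) - d) • v := by
    rw [Matrix.sub_mulVec, hmv, Matrix.smul_mulVec, Matrix.one_mulVec, sub_smul]
  have h2 : (0 : Matrix n n ℂ) *ᵥ v = ((lam:ℂ) - c) • (((lam:ℂ) - d) • v) := by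
    rw [← h, ← Matrix.mulVec_mulVec, h1, Matrix.mulVec_smul, Matrix.sub_mulVec, hmv,
      Matrix.smul_mulVec, Matrix.one_mulVec]
    module
  rw [Matrix.zero_mulVec, smul_smul, eq_comm, smul_eq_zero] at h2
  rcases h2 with h2 | h2
  · rcases mul_eq_zero.mp h2 with h3 | h3
    · left; exact_mod_cast sub_eq_zero.mp h3
    · right; exact_mod_cast sub_eq_zero.mp h3
  · exact absurd h2 hv0

lemma matLog_affine {n : Type*} [Fintype n] [DecidableEq n] {A : Matrix n n ℂ}
    (hA : A.IsHermitian) (a b : ℝ)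
    (h : ∀ i, Real.log (hA.eigenvalues i) = a * hA.eigenvalues i + b) :
    matLog A = (a : ℂ) • A + (b : ℂ) • 1 := by
  rw [matLog, dif_pos hA]
  have hd : Matrix.diagonal (fun i => (Real.log (hA.eigenvalues i) : ℂ))
      = (a:ℂ) • Matrix.diagonal (RCLike.ofReal ∘ hA.eigenvalues) + (b:ℂ) • 1 := by
    ext i j
    by_cases hij : i = j
    · subst hij
      simp only [Matrix.diagonal_apply_eq, Matrix.add_apply, Matrix.smul_apply,
        Matrix.one_apply_eq, Function.comp_apply, smul_eq_mul, mul_one, h i]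
      push_cast
      rfl
    · simp [Matrix.diagonal_apply_ne _ hij, Matrix.one_apply_ne hij]
  rw [hd]
  have hU : (hA.eigenvectorUnitary : Matrix n n ℂ) * star (hA.eigenvectorUnitary : Matrix n n ℂ) = 1 :=
    (Matrix.mem_unitaryGroup_iff).mp hA.eigenvectorUnitary.2
  rw [Matrix.mul_add, Matrix.add_mul, Matrix.mul_smul, Matrix.mul_smul,
    Matrix.smul_mul, Matrix.smul_mul, Matrix.mul_one, hU]
  conv_rhs => rw [hA.spectral_theorem, Unitary.conjStarAlgAut_apply]

lemma matLog_of_proj {A : Matrix (Fin 2) (Fin 2) ℂ} (hA : A.IsHermitian)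
    (h : A * A = A) : matLog A = 0 := by
  have h0 : (A - (0:ℝ) • (1 : Matrix (Fin 2) (Fin 2) ℂ)) * (A - (1:ℝ) • 1) = 0 := by
    push_cast
    simp only [zero_smul, sub_zero, one_smul]
    rw [Matrix.mul_sub, Matrix.mul_one, h, sub_self]
  have := matLog_affine hA 0 0 (fun i => by
    rcases eigen_quad hA 0 1 (by exact_mod_cast h0) i with h1 | h1 <;>
      simp [h1])
  simpa using this

lemma projMinus_herm : projMinus.IsHermitian := by
  ext i j
  fin_cases i <;> fin_cases j <;> simp [projMinus, Matrix.IsHermitian]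

/-- For `ρ = |0⟩⟨0|`, `σ = (1−ε)|+⟩⟨+| + ε|−⟩⟨−|` (`0 < ε < 1`), the replacer channel
`M` and the pinching `N` in the eigenbasis of σ satisfy `D(M(ρ)‖N(σ)) = −log ε`, and hence
`D(ρ‖σ) − D(M(ρ)‖N(σ)) = (1/2)(log ε − log(1−ε))`. -/
theorem relEnt_counterexample_channels (ε : ℝ) (hε0 : 0 < ε) (hε1 : ε < 1) :
    relEnt (chanM proj0)
        (chanN (((1 - ε : ℝ) : ℂ) • projPlus + ((ε : ℝ) : ℂ) • projMinus)) =
      -Real.log ε ∧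
    relEnt proj0 (((1 - ε : ℝ) : ℂ) • projPlus + ((ε : ℝ) : ℂ) • projMinus) -
        relEnt (chanM proj0)
          (chanN (((1 - ε : ℝ) : ℂ) • projPlus + ((ε : ℝ) : ℂ) • projMinus)) =
      (1/2) * (Real.log ε - Real.log (1 - ε)) := by
  set σ : Matrix (Fin 2) (Fin 2) ℂ :=
    ((1 - ε : ℝ) : ℂ) • projPlus + ((ε : ℝ) : ℂ) • projMinus with hσdef
  have hσm : σ = !![(1/2 : ℂ), 1/2 - ε; 1/2 - ε, 1/2] := by
    ext i j
    fin_cases i <;> fin_cases j <;>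
      simp [hσdef, projPlus, projMinus] <;> ring
  have hσherm : σ.IsHermitian := by
    rw [hσm]
    ext i j
    fin_cases i <;> fin_cases j <;>
      simp [Matrix.conjTranspose_apply, Complex.ext_iff]
  -- chanN σ = σ
  have hPpPp : projPlus * projPlus = projPlus := by
    rw [projPlus, Matrix.mul_fin_two]; norm_num
  have hPmPm : projMinus * projMinus = projMinus := by
    rw [projMinus, Matrix.mul_fin_two]; norm_num
  have hPpPm : projPlus * projMinus = 0 := by
    rw [projPlus, projMinus, Matrix.mul_fin_two]; norm_num
    ext i j; fin_cases i <;> fin_cases j <;> norm_num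
  have hPmPp : projMinus * projPlus = 0 := by
    rw [projPlus, projMinus, Matrix.mul_fin_two]; norm_num
    ext i j; fin_cases i <;> fin_cases j <;> norm_num
  have hN : chanN σ = σ := by
    rw [chanN, hσdef]
    simp only [Matrix.mul_add, Matrix.add_mul, Matrix.mul_smul, Matrix.smul_mul,
      hPpPp, hPmPm, hPpPm, hPmPp, Matrix.mul_zero, Matrix.zero_mul, smul_zero]
    abel
  -- quadratic relation for σ
  have hquad : (σ - ((1 - ε : ℝ) : ℂ) • 1) * (σ - ((ε : ℝ) : ℂ) • 1) = 0 := by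
    rw [hσm]
    ext i j
    fin_cases i <;> fin_cases j <;>
      · simp [Matrix.mul_apply, Fin.sum_univ_two, Matrix.one_apply]
        ring
  -- affine interpolation coefficients
  obtain ⟨a, b, hab1, hab2⟩ :
      ∃ a b : ℝ, a * (1 - ε) + b = Real.log (1 - ε) ∧ a * ε + b = Real.log ε := by
    by_cases hhalf : ε = 1/2
    · exact ⟨0, Real.log ε, by rw [hhalf]; norm_num, by norm_num⟩
    · refine ⟨(Real.log (1 - ε) - Real.log ε) / (1 - 2*ε), Real.log ε -
        (Real.log (1 - ε) - Real.log ε) / (1 - 2*ε) * ε, ?_, by ring⟩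
      have h2ε : 1 - 2*ε ≠ 0 := by
        intro hcon
        apply hhalf
        linarith
      linear_combination div_mul_cancel₀ (Real.log (1 - ε) - Real.log ε) h2ε
  have hlog : matLog σ = (a : ℂ) • σ + (b : ℂ) • 1 := by
    apply matLog_affine hσherm
    intro i
    rcases eigen_quad hσherm (1 - ε) ε hquad i with h1 | h1 <;> rw [h1]
    · rw [← hab1]
    · rw [← hab2]
  -- matLog of the projections is 0
  have hproj0herm : proj0.IsHermitian := by
    ext i j
    fin_cases i <;> fin_cases j <;> simp [proj0, Matrix.conjTranspose_apply]
  have hlog0 : matLog proj0 = 0 :=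
    matLog_of_proj hproj0herm (by rw [proj0, Matrix.mul_fin_two]; norm_num)
  have hlogm : matLog projMinus = 0 := matLog_of_proj projMinus_herm hPmPm
  have hM : chanM proj0 = projMinus := by
    rw [chanM, proj0, Matrix.trace_fin_two]
    norm_num
  -- explicit matLog σ
  have hlogm2 : matLog σ = !![(a/2 + b : ℂ), a*(1/2 - ε); a*(1/2 - ε), a/2 + b] := by
    rw [hlog, hσm]
    ext i j
    fin_cases i <;> fin_cases j <;>
      · simp [Matrix.one_apply]
        try ring
  -- first relative entropy
  have key1 : relEnt (chanM proj0) (chanN σ) = -Real.log ε := by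
    rw [hM, hN, relEnt, hlogm, hlogm2, zero_sub]
    rw [projMinus]
    rw [show -(!![(a/2 + b : ℂ), a*(1/2 - ε); a*(1/2 - ε), a/2 + b])
        = !![(-(a/2 + b) : ℂ), -(a*(1/2 - ε)); -(a*(1/2 - ε)), -(a/2 + b)] by
      ext i j; fin_cases i <;> fin_cases j <;> simp]
    rw [Matrix.mul_fin_two, Matrix.trace_fin_two]
    have : a * ε + b = Real.log ε := hab2
    rw [← this]
    push_cast
    simp [Complex.add_re, Complex.mul_re]
    ring
  -- second relative entropy
  have key2 : relEnt proj0 σ = -(1/2) * (Real.log (1 - ε) + Real.log ε) := by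
    rw [relEnt, hlog0, hlogm2, zero_sub, proj0]
    rw [show -(!![(a/2 + b : ℂ), a*(1/2 - ε); a*(1/2 - ε), a/2 + b])
        = !![(-(a/2 + b) : ℂ), -(a*(1/2 - ε)); -(a*(1/2 - ε)), -(a/2 + b)] by
      ext i j; fin_cases i <;> fin_cases j <;> simp]
    rw [Matrix.mul_fin_two, Matrix.trace_fin_two]
    have hsum : Real.log (1 - ε) + Real.log ε = a + 2*b := by
      rw [← hab1, ← hab2]; ring
    rw [hsum]
    push_cast
    simp [Complex.add_re, Complex.mul_re]
    ring
  refine ⟨key1, ?_⟩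
  rw [key1, key2]
  ring
end
end
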